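/- The total area (sum of all ordinates c_1 + ... + c_{2n}) summed over all Deutsch paths of length 2n returning to the x-axis equals Σ_{k≥0} 3^k · [ C(3n-k, n-1-k) + 3·C(3n-1-k, n-2-k) ]. -/

import Mathlib

/-- A Deutsch step: up-step 1 or a down-step -1, -3, -5, .... -/
def DeutschStep (s : ℤ) : Prop := s = 1 ∨ ∃ j : ℕ, s = -(2 * j + 1)

/-- A Deutsch path: all steps are Deutsch steps and all partial sums (heights)
are nonnegative. -/
def IsDeutschPath (p : List ℤ) : Prop :=
  (∀ s ∈ p, DeutschStep s) ∧ ∀ m : ℕ, 0 ≤ (p.take m).sum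

/-- Number of Deutsch paths from (0,0) to (n,k). -/
noncomputable def deutschCount (n k : ℕ) : ℕ :=
  Nat.card {p : List ℤ // p.length = n ∧ IsDeutschPath p ∧ p.sum = (k : ℤ)}

/-- The area of a path given by its step list: the sum of the ordinates
c₁ + c₂ + ⋯ + c_{length}, where c_m is the m-th partial sum of the steps. -/
def pathArea (p : List ℤ) : ℤ :=
  ∑ m ∈ Finset.range p.length, (p.take (m + 1)).sum

/-!
Let `c(n, k)` and `A(n, k)` be the number and the total area of the Deutsch paths of length `n`
ending at height `k`. Lowering the last step by `2` turns the paths ending at `k + 2` into the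
paths ending at `k` whose last step is a down-step, so for `k ≥ 0`
`c(n+1, k) = c(n, k-1) + c(n+1, k+2)` and
`A(n+1, k) = A(n, k-1) + k c(n, k-1) + A(n+1, k+2) - 2 c(n+1, k+2)`.
Writing `n = k + 2q`, these recurrences determine everything from the single path `q = 0`, and by
Pascal's rule they are also satisfied by
`c = C(k+3q, q) - 2 C(k+3q, q-1)` and
`2A = (2 - k(3k+1)) G(k+3q, q-1) + 3(k+1)(k+2) G(k+3q-1, q-2) + k(k+1) G(k+3q, q)`,
where `G(h, q) = ∑ⱼ 3ʲ C(h-j, q-j)`; both formulas vanish at `k = -1`, which settles the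
boundary `k = 0`. The theorem is the case `k = 0`, `q = n`.
-/

open Finset

lemma deutschStep_iff (s : ℤ) : DeutschStep s ↔ s = 1 ∨ s < 0 ∧ Odd s := by
  constructor
  · rintro (rfl | ⟨j, rfl⟩)
    · exact Or.inl rfl
    · exact Or.inr ⟨by omega, -j - 1, by ring⟩
  · rintro (rfl | ⟨hs, j, rfl⟩)
    · exact Or.inl rfl
    · exact Or.inr ⟨(-j - 1).toNat, by omega⟩

instance : DecidablePred DeutschStep := fun s => decidable_of_iff _ (deutschStep_iff s).symm

lemma DeutschStep.le_one {s : ℤ} (hs : DeutschStep s) : s ≤ 1 := by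
  rcases hs with rfl | ⟨j, rfl⟩ <;> omega

/-- The down-steps are exactly the Deutsch steps lowered by `2`. -/
lemma ite_deutschStep {M : Type*} [AddMonoid M] (s : ℤ) (x : M) :
    (if DeutschStep s then x else 0) =
      (if s = 1 then x else 0) + if DeutschStep (s + 2) then x else 0 := by
  have key : DeutschStep s ↔ s = 1 ∨ DeutschStep (s + 2) := by
    simp only [deutschStep_iff, Int.odd_add, even_two, iff_true]
    grind
  have excl : ¬ (s = 1 ∧ DeutschStep (s + 2)) := by
    rintro ⟨rfl, h⟩
    exact absurd h.le_one (by norm_num)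
  by_cases h1 : s = 1 <;> by_cases h2 : DeutschStep (s + 2) <;> simp_all

noncomputable def deutschSteps (h : ℤ) : Finset ℤ := (Icc (-h) 1).filter DeutschStep

lemma mem_deutschSteps {h s : ℤ} : s ∈ deutschSteps h ↔ DeutschStep s ∧ 0 ≤ h + s := by
  simp only [deutschSteps, mem_filter, mem_Icc]
  constructor
  · rintro ⟨⟨hs, -⟩, hstep⟩
    exact ⟨hstep, by omega⟩
  · rintro ⟨hstep, hs⟩
    exact ⟨⟨by omega, hstep.le_one⟩, hstep⟩

noncomputable def deutschPaths : ℕ → Finset (List ℤ)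
  | 0 => {[]}
  | n + 1 => (deutschPaths n).biUnion fun q => (deutschSteps q.sum).image fun s => q ++ [s]

lemma IsDeutschPath.sum_nonneg {p : List ℤ} (hp : IsDeutschPath p) : 0 ≤ p.sum := by
  simpa using hp.2 p.length

lemma sum_le_length_of_forall_deutschStep {l : List ℤ} (hl : ∀ s ∈ l, DeutschStep s) :
    l.sum ≤ l.length := by
  simpa using List.sum_le_card_nsmul l 1 fun s hs => (hl s hs).le_one

lemma IsDeutschPath.sum_le_length {p : List ℤ} (hp : IsDeutschPath p) : p.sum ≤ p.length :=
  sum_le_length_of_forall_deutschStep hp.1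

lemma isDeutschPath_append_singleton {q : List ℤ} {s : ℤ} :
    IsDeutschPath (q ++ [s]) ↔ IsDeutschPath q ∧ DeutschStep s ∧ 0 ≤ q.sum + s := by
  have take_eq : ∀ m, (q ++ [s]).take m = if m ≤ q.length then q.take m else q ++ [s] := by
    intro m
    split_ifs with hm
    · exact List.take_append_of_le_length hm
    · exact List.take_of_length_le (by simp; omega)
  simp only [IsDeutschPath, List.mem_append, List.mem_singleton, take_eq]
  constructor
  · rintro ⟨hsteps, hsums⟩
    refine ⟨⟨fun x hx => hsteps x (Or.inl hx), fun m => ?_⟩, hsteps s (Or.inr rfl), ?_⟩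
    · by_cases hm : m ≤ q.length
      · simpa [hm] using hsums m
      · simpa [List.take_of_length_le (not_le.1 hm).le] using hsums q.length
    · simpa using hsums (q.length + 1)
  · rintro ⟨⟨hsteps, hsums⟩, hs, hend⟩
    refine ⟨fun x hx => hx.elim (hsteps x) (· ▸ hs), fun m => ?_⟩
    split_ifs
    exacts [hsums m, by simpa using hend]

lemma mem_deutschPaths {n : ℕ} {p : List ℤ} :
    p ∈ deutschPaths n ↔ p.length = n ∧ IsDeutschPath p := by
  induction n generalizing p with
  | zero =>
    simp only [deutschPaths, mem_singleton, List.length_eq_zero_iff, iff_self_and]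
    rintro rfl
    simp [IsDeutschPath]
  | succ n ih =>
    simp only [deutschPaths, mem_biUnion, mem_image, mem_deutschSteps]
    constructor
    · rintro ⟨q, hq, s, hs, rfl⟩
      obtain ⟨hlen, hq⟩ := ih.1 hq
      exact ⟨by simp [hlen], isDeutschPath_append_singleton.2 ⟨hq, hs⟩⟩
    · rintro ⟨hlen, hp⟩
      obtain ⟨q, s, rfl⟩ := p.eq_nil_or_concat'.resolve_left (by rintro rfl; simp at hlen)
      obtain ⟨hq, hs⟩ := isDeutschPath_append_singleton.1 hp
      exact ⟨q, ih.2 ⟨by simpa using hlen, hq⟩, s, hs, rfl⟩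

lemma sum_deutschPaths_succ {M : Type*} [AddCommMonoid M] (n : ℕ) (f : List ℤ → M) :
    ∑ p ∈ deutschPaths (n + 1), f p =
      ∑ q ∈ deutschPaths n, ∑ s ∈ deutschSteps q.sum, f (q ++ [s]) := by
  rw [deutschPaths, sum_biUnion]
  · refine sum_congr rfl fun q _ => sum_image fun s _ t _ h => ?_
    simpa using h
  · intro q _ q' _ hne
    simp only [Function.onFun, disjoint_left, mem_image]
    rintro _ ⟨s, _, rfl⟩ ⟨t, _, h⟩
    exact hne (List.append_inj' h rfl).1.symm

noncomputable def deutschPathsTo (n : ℕ) (k : ℤ) : Finset (List ℤ) :=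
  (deutschPaths n).filter (·.sum = k)

lemma deutschPathsTo_eq_empty_of_neg (n : ℕ) {k : ℤ} (hk : k < 0) :
    deutschPathsTo n k = ∅ := by
  refine filter_false_of_mem fun p hp => ?_
  have := (mem_deutschPaths.1 hp).2.sum_nonneg
  omega

lemma deutschPathsTo_eq_empty_of_lt {n : ℕ} {k : ℤ} (hk : n < k) :
    deutschPathsTo n k = ∅ := by
  refine filter_false_of_mem fun p hp => ?_
  obtain ⟨hn, hp⟩ := mem_deutschPaths.1 hp
  have := hp.sum_le_length
  omega

lemma sum_deutschPathsTo_succ {M : Type*} [AddCommMonoid M] (f : List ℤ → M) (n : ℕ) {k : ℤ}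
    (hk : 0 ≤ k) :
    ∑ p ∈ deutschPathsTo (n + 1) k, f p =
      ∑ q ∈ deutschPaths n, if DeutschStep (k - q.sum) then f (q ++ [k - q.sum]) else 0 := by
  rw [deutschPathsTo, sum_filter, sum_deutschPaths_succ]
  refine sum_congr rfl fun q _ => ?_
  have hsum : ∀ s, (q ++ [s]).sum = k ↔ s = k - q.sum := fun s => by simp; omega
  simp only [hsum, sum_ite_eq', mem_deutschSteps, add_sub_cancel, hk, and_true]

noncomputable def pathCount (n : ℕ) (k : ℤ) : ℤ := #(deutschPathsTo n k)

noncomputable def totalArea (n : ℕ) (k : ℤ) : ℤ := ∑ p ∈ deutschPathsTo n k, pathArea p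

lemma pathArea_append_singleton (q : List ℤ) (s : ℤ) :
    pathArea (q ++ [s]) = pathArea q + (q.sum + s) := by
  simp only [pathArea, List.length_append, List.length_singleton, sum_range_succ,
    List.take_of_length_le (by simp : (q ++ [s]).length ≤ q.length + 1), List.sum_append,
    List.sum_singleton]
  congr 1
  refine sum_congr rfl fun m hm => ?_
  rw [List.take_append_of_le_length (by simp at hm; omega)]

lemma pathCount_succ (n : ℕ) {k : ℤ} (hk : 0 ≤ k) :
    pathCount (n + 1) k = pathCount n (k - 1) + pathCount (n + 1) (k + 2) := by
  simp only [pathCount, cast_card]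
  rw [sum_deutschPathsTo_succ _ _ hk, sum_deutschPathsTo_succ _ _ (by omega), deutschPathsTo,
    sum_filter, ← sum_add_distrib]
  refine sum_congr rfl fun q _ => ?_
  rw [ite_deutschStep, show k + 2 - q.sum = k - q.sum + 2 by ring]
  congr 1
  exact if_congr (by omega) rfl rfl

lemma totalArea_succ (n : ℕ) {k : ℤ} (hk : 0 ≤ k) :
    totalArea (n + 1) k = totalArea n (k - 1) + k * pathCount n (k - 1) +
      totalArea (n + 1) (k + 2) - 2 * pathCount (n + 1) (k + 2) := by
  simp only [totalArea, pathCount, cast_card]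
  rw [sum_deutschPathsTo_succ _ _ hk, sum_deutschPathsTo_succ _ _ (by omega),
    sum_deutschPathsTo_succ _ _ (by omega), deutschPathsTo, sum_filter, sum_filter, mul_sum,
    mul_sum, ← sum_add_distrib, ← sum_add_distrib, ← sum_sub_distrib]
  refine sum_congr rfl fun q _ => ?_
  simp only [pathArea_append_singleton, ite_deutschStep (k - q.sum),
    show k + 2 - q.sum = k - q.sum + 2 by ring, show k - q.sum = 1 ↔ q.sum = k - 1 by omega]
  split_ifs <;> ring

def binom (a : ℕ) (b : ℤ) : ℤ := if 0 ≤ b then (a.choose b.toNat : ℤ) else 0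

lemma binom_of_neg (a : ℕ) {b : ℤ} (hb : b < 0) : binom a b = 0 := by
  simp [binom, not_le.2 hb]

lemma binom_natCast (a b : ℕ) : binom a b = a.choose b := by
  simp [binom]

lemma binom_zero (a : ℕ) : binom a 0 = 1 := by
  simp [binom]

lemma binom_succ (a : ℕ) (b : ℤ) : binom (a + 1) b = binom a b + binom a (b - 1) := by
  rcases lt_or_ge b 0 with hb | hb
  · simp [binom_of_neg _ hb, binom_of_neg _ (show b - 1 < 0 by omega)]
  obtain ⟨b, rfl⟩ := Int.eq_ofNat_of_zero_le hb
  cases b with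
  | zero => simp [binom_zero, binom_of_neg]
  | succ b =>
    rw [show ((b + 1 : ℕ) : ℤ) - 1 = b by push_cast; ring, binom_natCast, binom_natCast,
      binom_natCast, Nat.choose_succ_succ', Nat.cast_add, add_comm]

section DiagSum

variable (c : ℤ)

def diagSum (h : ℕ) (q : ℤ) : ℤ := ∑ j ∈ range (h + 1), c ^ j * binom (h - j) (q - j)

lemma diagSum_of_neg (h : ℕ) {q : ℤ} (hq : q < 0) : diagSum c h q = 0 :=
  sum_eq_zero fun j _ => by rw [binom_of_neg _ (by omega), mul_zero]

lemma diagSum_zero (h : ℕ) : diagSum c h 0 = 1 := by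
  rw [diagSum, sum_eq_single_of_mem 0 (by simp)]
  · simp [binom_zero]
  · intro j _ hj
    rw [binom_of_neg _ (by omega), mul_zero]

lemma diagSum_eq_sum_range {h m : ℕ} {q : ℤ} (hq : q < m) (hm : m ≤ h + 1) :
    diagSum c h q = ∑ j ∈ range m, c ^ j * binom (h - j) (q - j) := by
  refine (sum_subset (range_subset_range.2 hm) fun j _ hj => ?_).symm
  rw [binom_of_neg _ (by simp at hj; omega), mul_zero]

lemma diagSum_succ {h : ℕ} {q : ℤ} (hq : q ≤ h) :
    diagSum c (h + 1) q = diagSum c h q + diagSum c h (q - 1) := by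
  rw [diagSum, sum_range_succ, binom_of_neg _ (by omega), mul_zero, add_zero, diagSum, diagSum,
    ← sum_add_distrib]
  refine sum_congr rfl fun j hj => ?_
  rw [show h + 1 - j = h - j + 1 by simp at hj; omega, binom_succ, sub_right_comm q 1]
  ring

lemma diagSum_succ_eq_binom_add (h : ℕ) (q : ℤ) :
    diagSum c (h + 1) q = binom (h + 1) q + c * diagSum c h (q - 1) := by
  rw [diagSum, sum_range_succ', diagSum, mul_sum, add_comm]
  simp only [pow_succ, pow_zero, one_mul, Nat.cast_zero, sub_zero, Nat.sub_zero, Nat.cast_succ,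
    Nat.add_sub_add_right]
  congr 1
  refine sum_congr rfl fun j _ => ?_
  rw [show q - (j + 1) = q - 1 - j by ring]
  ring

lemma binom_succ_eq_diagSum {h : ℕ} {q : ℤ} (hq : q ≤ h) :
    binom (h + 1) q = diagSum c h q - (c - 1) * diagSum c h (q - 1) := by
  linear_combination diagSum_succ c hq - diagSum_succ_eq_binom_add c h q

end DiagSum

def countFormula (L q : ℕ) : ℤ := binom L q - 2 * binom L ((q : ℤ) - 1)

def areaFormula (L q : ℕ) (k : ℤ) : ℤ :=
  (2 - k * (3 * k + 1)) * diagSum 3 L (q - 1) + 3 * (k + 1) * (k + 2) * diagSum 3 (L - 1) (q - 2) +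
    k * (k + 1) * diagSum 3 L q

lemma countFormula_zero (L : ℕ) : countFormula L 0 = 1 := by
  simp [countFormula, binom_zero, binom_of_neg]

lemma areaFormula_zero (L : ℕ) (k : ℤ) : areaFormula L 0 k = k * (k + 1) := by
  simp [areaFormula, diagSum_zero, diagSum_of_neg]

lemma areaFormula_neg_one (L q : ℕ) : areaFormula L q (-1) = 0 := by
  simp [areaFormula]

lemma countFormula_succ (L q : ℕ) :
    countFormula (L + 1) (q + 1) = countFormula L q + countFormula L (q + 1) := by
  simp only [countFormula, binom_succ L, Nat.cast_succ, add_sub_cancel_right]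
  ring

lemma countFormula_three_mul_add_two (q : ℕ) : countFormula (3 * q + 2) (q + 1) = 0 := by
  have h := Nat.choose_succ_right_eq (3 * q + 2) q
  rw [show 3 * q + 2 - q = 2 * (q + 1) by omega, ← mul_assoc, mul_comm _ 2] at h
  have h2 : (3 * q + 2).choose (q + 1) = 2 * (3 * q + 2).choose q :=
    Nat.eq_of_mul_eq_mul_right (Nat.succ_pos q) h
  rw [countFormula, show ((q + 1 : ℕ) : ℤ) - 1 = q by push_cast; ring, binom_natCast,
    binom_natCast, h2]
  push_cast
  ring

lemma areaFormula_succ {L q : ℕ} (hq : q + 1 ≤ L) (k : ℤ) :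
    areaFormula (L + 2) (q + 1) k =
      areaFormula (L + 1) q (k + 2) + areaFormula (L + 1) (q + 1) (k - 1) +
        2 * k * countFormula (L + 1) (q + 1) - 4 * countFormula (L + 1) q := by
  simp only [areaFormula, countFormula, Nat.add_sub_cancel, Nat.cast_succ, add_sub_cancel_right,
    show L + 2 - 1 = L + 1 from rfl, show (q : ℤ) + 1 - 2 = q - 1 by ring]
  set Q : ℤ := (q : ℤ)
  have hQ : Q + 1 ≤ L := by omega
  -- Pascal's rule expresses every term through `diagSum 3 L` at `Q + 1`, `Q`, `Q - 1`, `Q - 2`.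
  have g1 : diagSum 3 (L + 1) (Q + 1) = diagSum 3 L (Q + 1) + diagSum 3 L Q := by
    simpa using diagSum_succ 3 hQ
  have g2 : diagSum 3 (L + 1) Q = diagSum 3 L Q + diagSum 3 L (Q - 1) :=
    diagSum_succ 3 (by omega)
  have g3 : diagSum 3 (L + 1) (Q - 1) = diagSum 3 L (Q - 1) + diagSum 3 L (Q - 2) := by
    simpa [show Q - 1 - 1 = Q - 2 by ring] using diagSum_succ 3 (show Q - 1 ≤ L by omega)
  have g4 : diagSum 3 (L + 2) (Q + 1) = diagSum 3 (L + 1) (Q + 1) + diagSum 3 (L + 1) Q := by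
    simpa using diagSum_succ 3 (show Q + 1 ≤ ((L + 1 : ℕ) : ℤ) by push_cast; omega)
  have g5 : diagSum 3 (L + 2) Q = diagSum 3 (L + 1) Q + diagSum 3 (L + 1) (Q - 1) :=
    diagSum_succ 3 (show Q ≤ ((L + 1 : ℕ) : ℤ) by push_cast; omega)
  have c1 : binom (L + 1) (Q + 1) = diagSum 3 L (Q + 1) - 2 * diagSum 3 L Q := by
    simpa using binom_succ_eq_diagSum 3 hQ
  have c2 : binom (L + 1) Q = diagSum 3 L Q - 2 * diagSum 3 L (Q - 1) := by
    simpa using binom_succ_eq_diagSum 3 (show Q ≤ L by omega)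
  have c3 : binom (L + 1) (Q - 1) = diagSum 3 L (Q - 1) - 2 * diagSum 3 L (Q - 2) := by
    simpa [show Q - 1 - 1 = Q - 2 by ring] using binom_succ_eq_diagSum 3 (show Q - 1 ≤ L by omega)
  linear_combination (k ^ 2 + k) * g4 + (2 - k - 3 * k ^ 2) * g5 + 2 * k * g1 - (10 * k + 4) * g2 +
    (3 * k ^ 2 + 21 * k + 20) * g3 - 2 * k * c1 + (4 * k + 4) * c2 - 8 * c3

/-- Meant for `n = k + 2 * q`. -/
def ClosedForms (n q : ℕ) (k : ℤ) : Prop :=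
  pathCount n k = countFormula (n + q) q ∧ 2 * totalArea n k = areaFormula (n + q) q k

lemma closedForms_height_eq_length (n : ℕ) : ClosedForms n 0 n := by
  simp only [ClosedForms, countFormula_zero, areaFormula_zero, add_zero]
  induction n with
  | zero => simp [pathCount, totalArea, deutschPathsTo, deutschPaths, pathArea, filter_singleton]
  | succ n ih =>
    have hempty : deutschPathsTo (n + 1) ((n + 1 : ℕ) + 2) = ∅ :=
      deutschPathsTo_eq_empty_of_lt (by omega)
    have hc : pathCount (n + 1) ((n + 1 : ℕ) + 2) = 0 := by
      rw [pathCount, hempty, card_empty, Nat.cast_zero]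
    have ha : totalArea (n + 1) ((n + 1 : ℕ) + 2) = 0 := by
      rw [totalArea, hempty, sum_empty]
    have hk : (0 : ℤ) ≤ (n + 1 : ℕ) := by positivity
    rw [pathCount_succ n hk, totalArea_succ n hk, hc, ha,
      show ((n + 1 : ℕ) : ℤ) - 1 = n by push_cast; ring, ih.1]
    constructor
    · simp
    · push_cast
      linear_combination ih.2

lemma closedForms_neg_one (q : ℕ) : ClosedForms (2 * q + 1) (q + 1) (-1) := by
  rw [ClosedForms, show 2 * q + 1 + (q + 1) = 3 * q + 2 by ring, countFormula_three_mul_add_two,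
    areaFormula_neg_one, pathCount, totalArea, deutschPathsTo_eq_empty_of_neg _ (by norm_num)]
  simp

lemma ClosedForms.succ {n q : ℕ} {k : ℤ} (hk : 0 ≤ k)
    (h₁ : ClosedForms (n + 1) (q + 1) (k - 1)) (h₂ : ClosedForms (n + 2) q (k + 2)) :
    ClosedForms (n + 2) (q + 1) k := by
  obtain ⟨hc₁, ha₁⟩ := h₁
  obtain ⟨hc₂, ha₂⟩ := h₂
  rw [show n + 1 + (q + 1) = n + q + 1 + 1 by ring] at hc₁ ha₁
  rw [show n + 2 + q = n + q + 1 + 1 by ring] at hc₂ ha₂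
  have hc : pathCount (n + 2) k = pathCount (n + 1) (k - 1) + pathCount (n + 2) (k + 2) :=
    pathCount_succ (n + 1) hk
  have ha : totalArea (n + 2) k = totalArea (n + 1) (k - 1) + k * pathCount (n + 1) (k - 1) +
      totalArea (n + 2) (k + 2) - 2 * pathCount (n + 2) (k + 2) :=
    totalArea_succ (n + 1) hk
  rw [ClosedForms, show n + 2 + (q + 1) = n + q + 1 + 2 by ring]
  constructor
  · rw [hc, hc₁, hc₂]
    exact ((countFormula_succ (n + q + 1 + 1) q).trans (add_comm _ _)).symm
  · rw [areaFormula_succ (by omega), ← ha₁, ← ha₂, ← hc₁, ← hc₂, ha]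
    ring

lemma closedForms (q k : ℕ) : ClosedForms (k + 2 * q) q k := by
  induction q generalizing k with
  | zero => simpa using closedForms_height_eq_length k
  | succ q ih =>
    induction k with
    | zero =>
      have h₂ : ClosedForms (2 * q + 2) q (0 + 2) := by simpa [add_comm] using ih 2
      simpa [show 2 * (q + 1) = 2 * q + 2 by ring] using
        (closedForms_neg_one q).succ le_rfl (by simpa using h₂)
    | succ k ihk =>
      have h₁ : ClosedForms (k + 2 * q + 1 + 1) (q + 1) ((k + 1 : ℕ) - 1) := by
        simpa [show k + 2 * (q + 1) = k + 2 * q + 1 + 1 by ring] using ihk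
      have h₂ : ClosedForms (k + 2 * q + 1 + 2) q ((k + 1 : ℕ) + 2) := by
        simpa [show k + 3 + 2 * q = k + 2 * q + 1 + 2 by ring, add_assoc] using ih (k + 3)
      simpa [show k + 1 + 2 * (q + 1) = k + 2 * q + 1 + 2 by ring] using
        h₁.succ (by positivity) h₂

lemma IsDeutschPath.pathArea_nonneg {p : List ℤ} (hp : IsDeutschPath p) : 0 ≤ pathArea p :=
  Finset.sum_nonneg fun m _ => hp.2 (m + 1)

lemma IsDeutschPath.pathArea_le {p : List ℤ} (hp : IsDeutschPath p) :
    pathArea p ≤ p.length ^ 2 := by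
  calc pathArea p ≤ ∑ _m ∈ range p.length, (p.length : ℤ) := sum_le_sum fun m _ => ?_
    _ = p.length ^ 2 := by simp [sq]
  calc (p.take (m + 1)).sum ≤ (p.take (m + 1)).length :=
        sum_le_length_of_forall_deutschStep fun s hs => hp.1 s (List.mem_of_mem_take hs)
    _ ≤ p.length := by exact_mod_cast List.length_take_le' _ _

lemma sum_mul_card_eq_totalArea (n : ℕ) (k : ℤ) :
    ((∑ a ∈ range (n ^ 2 + 1), a * Nat.card {p : List ℤ // p.length = n ∧
      IsDeutschPath p ∧ p.sum = k ∧ pathArea p = (a : ℤ)} : ℕ) : ℤ) = totalArea n k := by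
  have hpaths : ∀ p ∈ deutschPathsTo n k, IsDeutschPath p ∧ p.length = n := fun p hp =>
    (mem_deutschPaths.1 (mem_filter.1 hp).1).symm
  have hmaps : ∀ p ∈ deutschPathsTo n k, (pathArea p).toNat ∈ range (n ^ 2 + 1) := by
    intro p hp
    obtain ⟨hp, hlen⟩ := hpaths p hp
    have : pathArea p ≤ ((n ^ 2 : ℕ) : ℤ) := by simpa [hlen] using hp.pathArea_le
    rw [mem_range]
    omega
  rw [Nat.cast_sum, totalArea, ← sum_fiberwise_of_maps_to hmaps]
  refine sum_congr rfl fun a _ => ?_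
  have hfiber : ∀ p ∈ deutschPathsTo n k, (pathArea p).toNat = a ↔ pathArea p = a := by
    intro p hp
    have := (hpaths p hp).1.pathArea_nonneg
    omega
  have hcard : Nat.card {p : List ℤ // p.length = n ∧ IsDeutschPath p ∧ p.sum = k ∧
      pathArea p = (a : ℤ)} = #((deutschPathsTo n k).filter fun p => (pathArea p).toNat = a) := by
    rw [filter_congr hfiber, ← Nat.card_eq_finsetCard]
    exact Nat.card_congr <| Equiv.subtypeEquivRight fun p => by
      simp [deutschPathsTo, mem_deutschPaths, and_assoc]
  have harea : ∀ p ∈ (deutschPathsTo n k).filter fun p => (pathArea p).toNat = a,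
      pathArea p = a := fun p hp => (hfiber p (mem_filter.1 hp).1).1 (mem_filter.1 hp).2
  rw [Nat.cast_mul, hcard, sum_congr rfl harea, sum_const, nsmul_eq_mul, mul_comm]

lemma sum_choose_eq_diagSum (n : ℕ) :
    ((∑ k ∈ range n, 3 ^ k * ((3 * n - k).choose (n - 1 - k) +
        3 * (if k + 2 ≤ n then (3 * n - 1 - k).choose (n - 2 - k) else 0)) : ℕ) : ℤ) =
      diagSum 3 (3 * n) (n - 1) + 3 * diagSum 3 (3 * n - 1) (n - 2) := by
  rw [diagSum_eq_sum_range 3 (m := n) (by omega) (by omega),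
    diagSum_eq_sum_range 3 (m := n) (by omega) (by omega), mul_sum, ← sum_add_distrib]
  push_cast
  refine sum_congr rfl fun k hk => ?_
  rw [mem_range] at hk
  rw [show (n : ℤ) - 1 - k = (n - 1 - k : ℕ) by omega, binom_natCast]
  split_ifs with h
  · rw [show (n : ℤ) - 2 - k = (n - 2 - k : ℕ) by omega, binom_natCast]
    ring
  · rw [binom_of_neg _ (by omega)]
    ring

/-- The total area, summed over all Deutsch paths of length 2n
returning to the x-axis, equals Σ_{k≥0} 3ᵏ·[C(3n-k, n-1-k) + 3·C(3n-1-k, n-2-k)]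
(binomials vanishing when the lower index is negative, so only k < n contributes;
the area of any such path is at most 4n², so the left-hand sum over possible
area values a is finite). -/
theorem deutsch_total_area (n : ℕ) :
    ∑ a ∈ Finset.range (4 * n ^ 2 + 1),
        a * Nat.card {p : List ℤ // p.length = 2 * n ∧ IsDeutschPath p ∧
              p.sum = 0 ∧ pathArea p = (a : ℤ)} =
      ∑ k ∈ Finset.range n,
        3 ^ k * ((3 * n - k).choose (n - 1 - k) +
          3 * (if k + 2 ≤ n then (3 * n - 1 - k).choose (n - 2 - k) else 0)) := by
  have hArea : 2 * totalArea (2 * n) 0 = areaFormula (3 * n) n 0 := by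
    simpa [show 2 * n + n = 3 * n by ring] using (closedForms n 0).2
  have hLHS := sum_mul_card_eq_totalArea (2 * n) 0
  rw [show (2 * n) ^ 2 = 4 * n ^ 2 by ring] at hLHS
  rw [← Nat.cast_inj (R := ℤ), hLHS, sum_choose_eq_diagSum]
  simp only [areaFormula] at hArea
  linarith
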